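/- Let A = (0, a_2, a_3, …) be a sequence of nonnegative integers with a_1 = 0. Then Σ_{m=0}^{∞} m·e_{A,m} = Σ_p Σ_{j=2}^{∞} a_j (1/p^j − 1/p^{j+1}), where the outer sum runs over all primes p; that is, the expectation of the limiting distribution of ω_A(n) equals Σ_p Σ_{j=2}^{∞} a_j (1/p^j − 1/p^{j+1}) (both sides possibly being +∞). -/

import Mathlib

open scoped BigOperators

/-- A positive integer is *powerful* if every prime dividing it divides it with
multiplicity at least `2`. -/
def Powerful (f : ℕ) : Prop := 0 < f ∧ ∀ p : ℕ, p.Prime → p ∣ f → p ^ 2 ∣ f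

/-- The additive function `ω_A(n) = ∑_j a_j ω_j(n)` for a sequence of natural numbers. -/
def omegaA (a : ℕ → ℕ) (n : ℕ) : ℕ :=
  ∑ p ∈ n.primeFactors, a (n.factorization p)

/-- The density `e_{A,m}` of integers `n` with `ω_A(n) = m`. -/
noncomputable def eAm (a : ℕ → ℕ) (m : ℕ) : ℝ :=
  6 / Real.pi ^ 2 *
    ∑' f : {f : ℕ // Powerful f ∧ omegaA a f = m},
      ((f : ℕ) : ℝ)⁻¹ * ∏ p ∈ (f : ℕ).primeFactors, (1 + 1 / (p : ℝ))⁻¹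

/-!
The weight `w(f) = f⁻¹ ∏_{p ∣ f} (1 + 1/p)⁻¹` on powerful numbers is multiplicative with local
factors `∑_e w(p^e) = (1 - p⁻²)⁻¹`, so the Euler product gives `∑ w = ζ(2) = π²/6`. The
expectation is `(6/π²) ∑_f ω_A(f) w(f)`; splitting `ω_A(f)` over the exact prime powers `p^j ∥ f`
and using multiplicativity, the `f` with `p^j ∥ f` contribute `w(p^j) ∑_{p ∤ f} w(f)
= w(p^j) (π²/6) (1 - p⁻²)`, which after normalisation is `p^{-j} - p^{-j-1}`. Working in `ℝ≥0∞`
makes every rearrangement of the sums legitimate, including when both sides are infinite.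
-/

open Real Finset
open scoped ENNReal

theorem powerful_iff_factorization {n : ℕ} :
    Powerful n ↔ n ≠ 0 ∧ ∀ p, n.factorization p ≠ 1 := by
  constructor
  · rintro ⟨hn, h⟩
    refine ⟨hn.ne', fun p hp1 => ?_⟩
    have hp : p.Prime := by
      by_contra hp
      simp [Nat.factorization_eq_zero_of_not_prime n hp] at hp1
    have hdvd := (hp.dvd_iff_one_le_factorization hn.ne').2 hp1.ge
    have := (hp.pow_dvd_iff_le_factorization hn.ne').1 (h p hp hdvd)
    omega
  · rintro ⟨hn, h⟩
    refine ⟨Nat.pos_of_ne_zero hn, fun p hp hdvd => (hp.pow_dvd_iff_le_factorization hn).2 ?_⟩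
    have := (hp.dvd_iff_one_le_factorization hn).1 hdvd
    have := h p
    omega

theorem Powerful.two_le_factorization {n p : ℕ} (hn : Powerful n) (hp : p ∈ n.primeFactors) :
    2 ≤ n.factorization p := by
  have h0 : n.factorization p ≠ 0 := Finsupp.mem_support_iff.1 (by simpa using hp)
  have h1 := (powerful_iff_factorization.1 hn).2 p
  omega

theorem not_powerful_zero : ¬ Powerful 0 := fun h => h.1.false

theorem powerful_one : Powerful 1 :=
  powerful_iff_factorization.2 ⟨one_ne_zero, by simp⟩

theorem Nat.Prime.powerful_pow_iff {p e : ℕ} (hp : p.Prime) : Powerful (p ^ e) ↔ e ≠ 1 := by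
  rw [powerful_iff_factorization, hp.factorization_pow]
  refine ⟨fun h he => by simpa [he] using h.2 p, fun he => ⟨pow_ne_zero e hp.ne_zero, fun q => ?_⟩⟩
  rcases eq_or_ne p q with rfl | hpq
  · simpa using he
  · simp [hpq]

theorem Nat.Coprime.powerful_mul_iff {m n : ℕ} (h : m.Coprime n) :
    Powerful (m * n) ↔ Powerful m ∧ Powerful n := by
  have hdisj : ∀ p, m.factorization p = 0 ∨ n.factorization p = 0 := fun p => by
    by_contra! hp
    simp only [Ne, Nat.factorization_eq_zero_iff, not_or, not_not] at hp
    exact hp.1.1.ne_one (Nat.eq_one_of_dvd_coprimes h hp.1.2.1 hp.2.2.1)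
  simp only [powerful_iff_factorization, mul_ne_zero_iff, Nat.factorization_mul_apply_of_coprime h]
  constructor
  · rintro ⟨⟨hm, hn⟩, hmn⟩
    exact ⟨⟨hm, fun p => by have := hmn p; have := hdisj p; omega⟩,
      ⟨hn, fun p => by have := hmn p; have := hdisj p; omega⟩⟩
  · rintro ⟨⟨hm, hm'⟩, ⟨hn, hn'⟩⟩
    exact ⟨⟨hm, hn⟩, fun p => by have := hm' p; have := hn' p; have := hdisj p; omega⟩

theorem Powerful.exists_eq_sq_mul_cube {n : ℕ} (hn : Powerful n) :
    ∃ a b : ℕ, n = a ^ 2 * b ^ 3 := by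
  induction n using Nat.recOnPosPrimePosCoprime with
  | zero => exact absurd hn not_powerful_zero
  | one => exact ⟨1, 1, rfl⟩
  | prime_pow p k hp _ =>
    have hk : k ≠ 1 := hp.powerful_pow_iff.1 hn
    refine ⟨p ^ ((k - 3 * (k % 2)) / 2), p ^ (k % 2), ?_⟩
    rw [← pow_mul, ← pow_mul, ← pow_add]
    congr 1
    omega
  | coprime x y _ _ hxy ihx ihy =>
    obtain ⟨hx, hy⟩ := hxy.powerful_mul_iff.1 hn
    obtain ⟨a, b, rfl⟩ := ihx hx
    obtain ⟨c, d, rfl⟩ := ihy hy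
    exact ⟨a * c, b * d, by ring⟩

theorem summable_inv_powerful :
    Summable (fun n : {n : ℕ // Powerful n} => ((n : ℕ) : ℝ)⁻¹) := by
  have hsq_cube : Summable (fun x : ℕ × ℕ => ((x.1 : ℝ) ^ 2)⁻¹ * ((x.2 : ℝ) ^ 3)⁻¹) :=
    (Real.summable_nat_pow_inv.2 one_lt_two).mul_of_nonneg
      (Real.summable_nat_pow_inv.2 (by norm_num : 1 < 3)) (fun _ => by positivity)
      (fun _ => by positivity)
  choose a b hab using fun n : {n : ℕ // Powerful n} => n.2.exists_eq_sq_mul_cube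
  have hinj : Function.Injective (fun n => (a n, b n)) := fun m n hmn => by
    simp only [Prod.mk.injEq] at hmn
    exact Subtype.ext (by rw [hab m, hab n, hmn.1, hmn.2])
  refine (hsq_cube.comp_injective hinj).congr fun n => ?_
  simp [hab n, mul_comm]

open Classical in
noncomputable def powerfulWeight (n : ℕ) : ℝ :=
  if Powerful n then (n : ℝ)⁻¹ * ∏ p ∈ n.primeFactors, (1 + 1 / (p : ℝ))⁻¹ else 0

theorem powerfulWeight_of_powerful {n : ℕ} (hn : Powerful n) :
    powerfulWeight n = (n : ℝ)⁻¹ * ∏ p ∈ n.primeFactors, (1 + 1 / (p : ℝ))⁻¹ :=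
  if_pos hn

theorem powerfulWeight_of_not_powerful {n : ℕ} (hn : ¬ Powerful n) : powerfulWeight n = 0 :=
  if_neg hn

theorem powerfulWeight_zero : powerfulWeight 0 = 0 :=
  powerfulWeight_of_not_powerful not_powerful_zero

theorem powerfulWeight_one : powerfulWeight 1 = 1 := by
  simp [powerfulWeight_of_powerful powerful_one]

theorem powerfulWeight_nonneg (n : ℕ) : 0 ≤ powerfulWeight n := by
  unfold powerfulWeight
  split_ifs <;> positivity

theorem powerfulWeight_le_inv (n : ℕ) : powerfulWeight n ≤ (n : ℝ)⁻¹ := by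
  by_cases hn : Powerful n
  · rw [powerfulWeight_of_powerful hn]
    refine mul_le_of_le_one_right (by positivity) (prod_le_one (fun _ _ => by positivity) ?_)
    exact fun p _ => inv_le_one_of_one_le₀ (le_add_of_nonneg_right (by positivity))
  · rw [powerfulWeight_of_not_powerful hn]
    positivity

theorem powerfulWeight_mul {m n : ℕ} (h : m.Coprime n) :
    powerfulWeight (m * n) = powerfulWeight m * powerfulWeight n := by
  by_cases hmn : Powerful m ∧ Powerful n
  · obtain ⟨hm, hn⟩ := hmn
    rw [powerfulWeight_of_powerful (h.powerful_mul_iff.2 ⟨hm, hn⟩), powerfulWeight_of_powerful hm,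
      powerfulWeight_of_powerful hn, Nat.primeFactors_mul hm.1.ne' hn.1.ne',
      prod_union h.disjoint_primeFactors, Nat.cast_mul, mul_inv]
    ring
  · rw [powerfulWeight_of_not_powerful (mt h.powerful_mul_iff.1 hmn)]
    rcases not_and_or.1 hmn with hm | hn
    · rw [powerfulWeight_of_not_powerful hm, zero_mul]
    · rw [powerfulWeight_of_not_powerful hn, mul_zero]

theorem powerfulWeight_prime_pow {p e : ℕ} (hp : p.Prime) (he : 2 ≤ e) :
    powerfulWeight (p ^ e) = ((p : ℝ) ^ e)⁻¹ * (1 + 1 / (p : ℝ))⁻¹ := by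
  rw [powerfulWeight_of_powerful (hp.powerful_pow_iff.2 (by omega)),
    Nat.primeFactors_prime_pow (by omega) hp, prod_singleton, Nat.cast_pow]

theorem summable_powerfulWeight : Summable powerfulWeight := by
  refine (Subtype.val_injective.summable_iff fun n hn =>
    powerfulWeight_of_not_powerful fun h => hn ⟨⟨n, h⟩, rfl⟩).1 ?_
  exact summable_inv_powerful.of_nonneg_of_le (fun _ => powerfulWeight_nonneg _)
    fun _ => powerfulWeight_le_inv _

theorem hasSum_powerfulWeight_prime_pow {p : ℕ} (hp : p.Prime) :
    HasSum (fun e => powerfulWeight (p ^ e)) (1 - ((p : ℝ) ^ 2)⁻¹)⁻¹ := by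
  have hp1 : (1 : ℝ) < p := by exact_mod_cast hp.one_lt
  set q : ℝ := (p : ℝ)⁻¹ with hq
  have htail_eq : (fun e => powerfulWeight (p ^ (e + 2))) = fun e => q ^ 2 * (1 + q)⁻¹ * q ^ e := by
    ext e
    rw [powerfulWeight_prime_pow hp (by omega), one_div, hq, pow_add, inv_pow, inv_pow, mul_inv]
    ring
  have htail : HasSum (fun e => powerfulWeight (p ^ (e + 2))) (q ^ 2 * (1 + q)⁻¹ * (1 - q)⁻¹) := by
    rw [htail_eq]
    exact (hasSum_geometric_of_lt_one (by positivity) (inv_lt_one_of_one_lt₀ hp1)).mul_left _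
  have hp_one : powerfulWeight (p ^ 1) = 0 :=
    powerfulWeight_of_not_powerful fun h => hp.powerful_pow_iff.1 h rfl
  have hsum : (1 - ((p : ℝ) ^ 2)⁻¹)⁻¹ =
      q ^ 2 * (1 + q)⁻¹ * (1 - q)⁻¹ + ∑ e ∈ range 2, powerfulWeight (p ^ e) := by
    rw [sum_range_succ, sum_range_one, pow_zero, powerfulWeight_one, hp_one, hq]
    have : (p : ℝ) - 1 ≠ 0 := by linarith
    have : (p : ℝ) ^ 2 - 1 ≠ 0 := by nlinarith
    field_simp
    ring
  rw [hsum]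
  exact (hasSum_nat_add_iff (f := fun e => powerfulWeight (p ^ e)) 2).1 htail

theorem tsum_eq_tsum_of_tsum_prime_pow_eq {R : Type*} [NormedCommRing R] [CompleteSpace R]
    {f g : ℕ → R} (hf₁ : f 1 = 1) (hfmul : ∀ {m n}, m.Coprime n → f (m * n) = f m * f n)
    (hf : Summable (‖f ·‖)) (hf₀ : f 0 = 0) (hg₁ : g 1 = 1)
    (hgmul : ∀ {m n}, m.Coprime n → g (m * n) = g m * g n) (hg : Summable (‖g ·‖)) (hg₀ : g 0 = 0)
    (h : ∀ p : ℕ, p.Prime → ∑' e, f (p ^ e) = ∑' e, g (p ^ e)) :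
    ∑' n, f n = ∑' n, g n := by
  have hfg : (fun p : Nat.Primes => ∑' e, f ((p : ℕ) ^ e)) =
      fun p : Nat.Primes => ∑' e, g ((p : ℕ) ^ e) :=
    funext fun p => h p p.2
  have := EulerProduct.eulerProduct_hasProd hf₁ hfmul hf hf₀
  rw [hfg] at this
  exact this.unique (EulerProduct.eulerProduct_hasProd hg₁ hgmul hg hg₀)

theorem tsum_powerfulWeight : ∑' n, powerfulWeight n = π ^ 2 / 6 := by
  have hsq_mul {m n : ℕ} (_ : m.Coprime n) :
      1 / ((m * n : ℕ) : ℝ) ^ 2 = 1 / (m : ℝ) ^ 2 * (1 / (n : ℝ) ^ 2) := by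
    rw [Nat.cast_mul, mul_pow, one_div_mul_one_div]
  have hsq_prime_pow (p : ℕ) (hp : p.Prime) :
      ∑' e, powerfulWeight (p ^ e) = ∑' e, 1 / ((p ^ e : ℕ) : ℝ) ^ 2 := by
    have hp1 : (1 : ℝ) < (p : ℝ) ^ 2 := by exact_mod_cast Nat.one_lt_pow two_ne_zero hp.one_lt
    rw [(hasSum_powerfulWeight_prime_pow hp).tsum_eq,
      ← tsum_geometric_of_lt_one (by positivity) (inv_lt_one_of_one_lt₀ hp1)]
    congr 1 with e
    rw [Nat.cast_pow, one_div, ← pow_mul, mul_comm, pow_mul, inv_pow]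
  rw [← hasSum_zeta_two.tsum_eq]
  exact tsum_eq_tsum_of_tsum_prime_pow_eq powerfulWeight_one powerfulWeight_mul
    summable_powerfulWeight.norm powerfulWeight_zero (by simp) hsq_mul
    hasSum_zeta_two.summable.norm (by simp) hsq_prime_pow

theorem tsum_ite_factorization_eq {g : ℕ → ℝ≥0∞} (hg₀ : g 0 = 0)
    (hgmul : ∀ {m n}, m.Coprime n → g (m * n) = g m * g n) {p : ℕ} (hp : p.Prime) (j : ℕ) :
    ∑' n, (if n.factorization p = j then g n else 0) =
      g (p ^ j) * ∑' n, if p ∣ n then 0 else g n := by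
  have hinj : Function.Injective (p ^ j * ·) := fun _ _ h =>
    Nat.eq_of_mul_eq_mul_left (pow_pos hp.pos j) h
  have hsupp : (Function.support fun n => if n.factorization p = j then g n else 0) ⊆
      Set.range (p ^ j * ·) := fun n hn => by
    have hj : n.factorization p = j := by
      by_contra h
      simp [h] at hn
    exact ⟨ordCompl[p] n, by rw [← hj]; exact Nat.ordProj_mul_ordCompl_eq_self n p⟩
  rw [← hinj.tsum_eq hsupp, ← ENNReal.tsum_mul_left]
  refine tsum_congr fun t => ?_
  rcases eq_or_ne t 0 with rfl | ht0
  · simp [hg₀]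
  have hfac : (p ^ j * t).factorization p = j + t.factorization p := by
    simp [Nat.factorization_mul (pow_ne_zero j hp.ne_zero) ht0, hp.factorization_pow]
  by_cases hpt : p ∣ t
  · have := hp.factorization_pos_of_dvd ht0 hpt
    simp [hfac, hpt, Nat.pos_iff_ne_zero.1 this]
  · simp [hfac, hpt, Nat.factorization_eq_zero_of_not_dvd hpt,
      hgmul ((hp.coprime_iff_not_dvd.2 hpt).pow_left j)]

theorem tsum_eq_tsum_prime_pow_mul {g : ℕ → ℝ≥0∞} (hg₀ : g 0 = 0)
    (hgmul : ∀ {m n}, m.Coprime n → g (m * n) = g m * g n) {p : ℕ} (hp : p.Prime) :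
    ∑' n, g n = (∑' j, g (p ^ j)) * ∑' n, if p ∣ n then 0 else g n := by
  simp_rw [← ENNReal.tsum_mul_right, ← tsum_ite_factorization_eq hg₀ hgmul hp]
  rw [ENNReal.tsum_comm]
  exact tsum_congr fun n => (tsum_ite_eq' (n.factorization p) fun _ => g n).symm

theorem ofReal_powerfulWeight_mul {m n : ℕ} (h : m.Coprime n) :
    ENNReal.ofReal (powerfulWeight (m * n)) =
      ENNReal.ofReal (powerfulWeight m) * ENNReal.ofReal (powerfulWeight n) := by
  rw [powerfulWeight_mul h, ENNReal.ofReal_mul (powerfulWeight_nonneg m)]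

theorem ofReal_powerfulWeight_zero : ENNReal.ofReal (powerfulWeight 0) = 0 := by
  rw [powerfulWeight_zero, ENNReal.ofReal_zero]

theorem ofReal_mul_tsum_not_dvd_powerfulWeight {p : ℕ} (hp : p.Prime) :
    ENNReal.ofReal (6 / π ^ 2) * ∑' n, (if p ∣ n then 0 else ENNReal.ofReal (powerfulWeight n)) =
      ENNReal.ofReal (1 - ((p : ℝ) ^ 2)⁻¹) := by
  set S := ∑' n, (if p ∣ n then 0 else ENNReal.ofReal (powerfulWeight n))
  set c : ℝ := 1 - ((p : ℝ) ^ 2)⁻¹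
  have hc : 0 < c := by
    have : (1 : ℝ) < (p : ℝ) ^ 2 := by exact_mod_cast Nat.one_lt_pow two_ne_zero hp.one_lt
    simpa [c] using inv_lt_one_of_one_lt₀ this
  have hS : ENNReal.ofReal (π ^ 2 / 6) = ENNReal.ofReal c⁻¹ * S := by
    have h := tsum_eq_tsum_prime_pow_mul (g := fun n => ENNReal.ofReal (powerfulWeight n))
      ofReal_powerfulWeight_zero ofReal_powerfulWeight_mul hp
    rwa [← ENNReal.ofReal_tsum_of_nonneg powerfulWeight_nonneg summable_powerfulWeight,
      tsum_powerfulWeight, ← ENNReal.ofReal_tsum_of_nonneg (fun _ => powerfulWeight_nonneg _)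
        (hasSum_powerfulWeight_prime_pow hp).summable,
      (hasSum_powerfulWeight_prime_pow hp).tsum_eq] at h
  calc ENNReal.ofReal (6 / π ^ 2) * S
      = ENNReal.ofReal (6 / π ^ 2 * c) * (ENNReal.ofReal c⁻¹ * S) := by
        rw [← mul_assoc, ← ENNReal.ofReal_mul (by positivity), mul_assoc, mul_inv_cancel₀ hc.ne',
          mul_one]
    _ = ENNReal.ofReal c := by
        rw [← hS, ← ENNReal.ofReal_mul (by positivity)]
        congr 1
        field_simp

theorem ofReal_mul_tsum_ite_factorization_powerfulWeight {p j : ℕ} (hp : p.Prime) (hj : 2 ≤ j) :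
    ENNReal.ofReal (6 / π ^ 2) *
        ∑' n, (if n.factorization p = j then ENNReal.ofReal (powerfulWeight n) else 0) =
      1 / (p : ℝ≥0∞) ^ j - 1 / (p : ℝ≥0∞) ^ (j + 1) := by
  have hp0 : (0 : ℝ) < p := by exact_mod_cast hp.pos
  have hcast : ∀ k, 1 / (p : ℝ≥0∞) ^ k = ENNReal.ofReal ((p : ℝ) ^ k)⁻¹ := fun k => by
    rw [one_div, ENNReal.ofReal_inv_of_pos (by positivity), ENNReal.ofReal_pow hp0.le,
      ENNReal.ofReal_natCast]
  rw [tsum_ite_factorization_eq (g := fun n => ENNReal.ofReal (powerfulWeight n))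
      ofReal_powerfulWeight_zero ofReal_powerfulWeight_mul hp,
    mul_left_comm, ofReal_mul_tsum_not_dvd_powerfulWeight hp,
    ← ENNReal.ofReal_mul (powerfulWeight_nonneg _), powerfulWeight_prime_pow hp hj, hcast, hcast,
    ← ENNReal.ofReal_sub _ (by positivity)]
  congr 1
  field_simp
  ring

theorem ofReal_eAm (a : ℕ → ℕ) (m : ℕ) :
    ENNReal.ofReal (eAm a m) = ENNReal.ofReal (6 / π ^ 2) *
      ∑' n, if omegaA a n = m then ENNReal.ofReal (powerfulWeight n) else 0 := by
  have hterm : ∀ f : {f // Powerful f ∧ omegaA a f = m},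
      ((f : ℕ) : ℝ)⁻¹ * ∏ p ∈ (f : ℕ).primeFactors, (1 + 1 / (p : ℝ))⁻¹ = powerfulWeight f :=
    fun f => (powerfulWeight_of_powerful f.2.1).symm
  have hsupp : (Function.support fun n =>
      if omegaA a n = m then ENNReal.ofReal (powerfulWeight n) else 0) ⊆
      {n | Powerful n ∧ omegaA a n = m} := fun n hn => by
    by_contra h
    refine hn ?_
    dsimp only
    split_ifs with hω
    · rw [powerfulWeight_of_not_powerful fun hP => h ⟨hP, hω⟩, ENNReal.ofReal_zero]
    · rfl
  rw [eAm, ENNReal.ofReal_mul (by positivity), tsum_congr hterm,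
    ENNReal.ofReal_tsum_of_nonneg (fun _ => powerfulWeight_nonneg _)
      (summable_powerfulWeight.comp_injective Subtype.val_injective),
    ← tsum_subtype_eq_of_support_subset hsupp]
  exact congrArg _ (tsum_congr fun f => (if_pos f.2.2).symm)

theorem tsum_mul_ofReal_eAm (a : ℕ → ℕ) :
    ∑' m : ℕ, (m : ℝ≥0∞) * ENNReal.ofReal (eAm a m) =
      ENNReal.ofReal (6 / π ^ 2) *
        ∑' n, (omegaA a n : ℝ≥0∞) * ENNReal.ofReal (powerfulWeight n) := by
  calc ∑' m : ℕ, (m : ℝ≥0∞) * ENNReal.ofReal (eAm a m)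
      = ∑' m : ℕ, ENNReal.ofReal (6 / π ^ 2) * ∑' n,
          if omegaA a n = m then (m : ℝ≥0∞) * ENNReal.ofReal (powerfulWeight n) else 0 :=
        tsum_congr fun m => by
          rw [ofReal_eAm, mul_left_comm, ← ENNReal.tsum_mul_left]
          simp_rw [mul_ite, mul_zero]
    _ = ENNReal.ofReal (6 / π ^ 2) * ∑' n, ∑' m : ℕ,
          if omegaA a n = m then (m : ℝ≥0∞) * ENNReal.ofReal (powerfulWeight n) else 0 := by
        rw [ENNReal.tsum_mul_left, ENNReal.tsum_comm]
    _ = _ := congrArg _ (tsum_congr fun n => tsum_ite_eq' (omegaA a n) _)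

theorem omegaA_mul_ofReal_powerfulWeight (a : ℕ → ℕ) (n : ℕ) :
    (omegaA a n : ℝ≥0∞) * ENNReal.ofReal (powerfulWeight n) =
      ∑' (p : Nat.Primes) (j : ℕ), if 2 ≤ j then
        (a j : ℝ≥0∞) * (if n.factorization p = j then ENNReal.ofReal (powerfulWeight n) else 0)
      else 0 := by
  by_cases hn : Powerful n
  swap
  · simp [powerfulWeight_of_not_powerful hn]
  have hj : ∀ p : ℕ, ∑' j, (if 2 ≤ j then
        (a j : ℝ≥0∞) * (if n.factorization p = j then ENNReal.ofReal (powerfulWeight n) else 0)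
      else 0) =
      if 2 ≤ n.factorization p then a (n.factorization p) * ENNReal.ofReal (powerfulWeight n)
      else 0 := fun p => by
    rw [tsum_eq_single (n.factorization p) fun j hj => by simp [Ne.symm hj]]
    simp
  simp_rw [hj]
  have hsupp : (Function.support fun k => if 2 ≤ n.factorization k then
      a (n.factorization k) * ENNReal.ofReal (powerfulWeight n) else 0) ⊆
      Set.range ((↑) : Nat.Primes → ℕ) := fun k hk => by
    by_cases hk' : k.Prime
    · exact ⟨⟨k, hk'⟩, rfl⟩
    · simp [Nat.factorization_eq_zero_of_not_prime n hk'] at hk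
  have hzero : ∀ k ∉ n.primeFactors, n.factorization k = 0 := fun k hk =>
    Finsupp.notMem_support_iff.1 (by simpa using hk)
  refine Eq.trans ?_ (Nat.Primes.coe_nat_injective.tsum_eq hsupp).symm
  rw [tsum_eq_sum (s := n.primeFactors) fun k hk => by simp [hzero k hk], omegaA, Nat.cast_sum,
    sum_mul]
  exact sum_congr rfl fun p hp => (if_pos (hn.two_le_factorization hp)).symm

theorem eAm_expectation_general (a : ℕ → ℕ) :
    ∑' m : ℕ, (m : ENNReal) * ENNReal.ofReal (eAm a m) =
      ∑' (p : Nat.Primes) (j : ℕ),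
        if 2 ≤ j then
          (a j : ENNReal) * (1 / ((p : ℕ) : ENNReal) ^ j - 1 / ((p : ℕ) : ENNReal) ^ (j + 1))
        else 0 := by
  calc ∑' m : ℕ, (m : ℝ≥0∞) * ENNReal.ofReal (eAm a m)
      = ENNReal.ofReal (6 / π ^ 2) *
          ∑' n, (omegaA a n : ℝ≥0∞) * ENNReal.ofReal (powerfulWeight n) :=
        tsum_mul_ofReal_eAm a
    _ = ∑' (p : Nat.Primes) (j : ℕ), if 2 ≤ j then (a j : ℝ≥0∞) * (ENNReal.ofReal (6 / π ^ 2) *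
          ∑' n, if n.factorization p = j then ENNReal.ofReal (powerfulWeight n) else 0) else 0 := by
        simp_rw [omegaA_mul_ofReal_powerfulWeight, ← ENNReal.tsum_mul_left]
        rw [ENNReal.tsum_comm]
        refine tsum_congr fun p => ?_
        rw [ENNReal.tsum_comm]
        refine tsum_congr fun j => ?_
        split_ifs <;> simp only [ENNReal.tsum_mul_left, mul_left_comm, tsum_zero, mul_zero]
    _ = _ := by
        refine tsum_congr fun p => tsum_congr fun j => ?_
        split_ifs with hj
        · rw [ofReal_mul_tsum_ite_factorization_powerfulWeight p.2 hj]
        · rfl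

theorem eAm_expectation (a : ℕ → ℕ) (h1 : a 1 = 0) :
    ∑' m : ℕ, (m : ENNReal) * ENNReal.ofReal (eAm a m) =
      ∑' (p : Nat.Primes) (j : ℕ),
        if 2 ≤ j then
          (a j : ENNReal) * (1 / ((p : ℕ) : ENNReal) ^ j - 1 / ((p : ℕ) : ENNReal) ^ (j + 1))
        else 0 :=
  eAm_expectation_general a
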